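/- Let G be a finite group, p a prime, and k a field of characteristic p, and suppose O_p(G) contains its own centralizer, i.e., C_G(O_p(G)) ≤ O_p(G). Then kG has a unique block, i.e., kG is indecomposable as a two-sided ideal: the identity is the only nonzero central idempotent of kG. -/

import Mathlib

open MonoidAlgebra

instance instCoeFunMonoidAlgebraCoeff {k G : Type*} [Semiring k] :
    CoeFun (MonoidAlgebra k G) (fun _ => G → k) := ⟨fun x => x.coeff⟩

section OrbSum
variable {p : ℕ} [Fact p.Prime] {k : Type*} [Field k] [CharP k p]

/-- Orbit-counting: a `p`-group-invariant function vanishing on fixed points sums to zero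
in characteristic `p`. -/
lemma orb_sum {Q : Type*} [Group Q] [Finite Q] {ι : Type*} [Fintype ι] [MulAction Q ι]
    (hQ : IsPGroup p Q) (F : ι → k)
    (hinv : ∀ (q : Q) (x : ι), F (q • x) = F x)
    (hfix : ∀ x : ι, (∀ q : Q, q • x = x) → F x = 0) :
    ∑ x : ι, F x = 0 := by
  classical
  obtain ⟨n, hn⟩ := IsPGroup.iff_card.mp hQ
  haveI : Fintype (Quotient (MulAction.orbitRel Q ι)) := Fintype.ofFinite _
  rw [← Finset.sum_fiberwise Finset.univ
    (fun x : ι => (Quotient.mk (MulAction.orbitRel Q ι) x)) F]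
  apply Finset.sum_eq_zero
  intro ω _
  set x₀ := Quotient.out ω with hx₀
  set t := Finset.univ.filter
    (fun x : ι => Quotient.mk (MulAction.orbitRel Q ι) x = ω) with ht
  have hmem : ∀ x, x ∈ t ↔ x ∈ MulAction.orbit Q x₀ := by
    intro x
    rw [ht, Finset.mem_filter]
    simp only [Finset.mem_univ, true_and]
    rw [← Quotient.out_eq ω, ← hx₀, Quotient.eq]
    exact MulAction.orbitRel_apply (G := Q)
  have hx₀t : x₀ ∈ t := (hmem x₀).mpr (MulAction.mem_orbit_self x₀)
  have hconst : ∀ x ∈ t, F x = F x₀ := by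
    intro x hx
    obtain ⟨q, rfl⟩ := (hmem x).mp hx
    exact hinv q x₀
  have hsum : ∑ x ∈ t, F x = t.card • F x₀ := by
    rw [Finset.sum_congr rfl hconst, Finset.sum_const]
  have hcard : (t.card : ℕ) ∣ p ^ n := by
    have h1 : (↑t : Set ι) = MulAction.orbit Q x₀ := by
      ext x; simpa using hmem x
    have h2 : t.card = Nat.card (MulAction.orbit Q x₀) := by
      rw [← h1, Nat.card_coe_set_eq, Set.ncard_coe_finset]
    rw [h2, Nat.card_congr (MulAction.orbitEquivQuotientStabilizer Q x₀), ← hn]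
    exact ⟨_, Subgroup.card_eq_card_quotient_mul_card_subgroup _⟩
  obtain ⟨j, hj, hjc⟩ := (Nat.dvd_prime_pow (Fact.out : p.Prime)).mp hcard
  rcases Nat.eq_zero_or_pos j with hj0 | hj1
  · -- singleton orbit
    subst hj0
    simp only [pow_zero] at hjc
    obtain ⟨a, hat⟩ := Finset.card_eq_one.mp hjc
    have hax : a = x₀ := by
      have := hx₀t; rw [hat, Finset.mem_singleton] at this; exact this.symm
    rw [hax] at hat
    have hfixed : ∀ q : Q, q • x₀ = x₀ := by
      intro q
      have : q • x₀ ∈ t := (hmem _).mpr (MulAction.mem_orbit x₀ q)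
      rwa [hat, Finset.mem_singleton] at this
    rw [hsum, hfix x₀ hfixed, smul_zero]
  · rw [hsum, nsmul_eq_mul]
    have : (t.card : k) = 0 := by
      rw [hjc]
      have : (p : k) = 0 := CharP.cast_eq_zero k p
      rw [Nat.cast_pow, this, zero_pow hj1.ne']
    rw [this, zero_mul]
end OrbSum

section Conv
variable {k : Type*} [CommSemiring k] {G : Type*} [Group G]

lemma conv_apply [Fintype G] (f g : MonoidAlgebra k G) (y : G) :
    (f * g) y = ∑ x : G, f x * g (x⁻¹ * y) := by
  classical
  rw [MonoidAlgebra.mul_apply, Finsupp.sum_fintype]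
  · apply Finset.sum_congr rfl
    intro a _
    rw [Finsupp.sum_fintype]
    · have h1 : ∀ b : G, (if a * b = y then f a * g b else 0)
          = (if b = a⁻¹ * y then f a * g b else 0) := by
        intro b
        congr 1
        simp [eq_inv_mul_iff_mul_eq]
      simp only [h1]
      rw [Finset.sum_ite_eq' Finset.univ (a⁻¹ * y) (fun b => f a * g b)]
      simp
    · intro b; simp
  · intro a
    simp [Finsupp.sum]

lemma central_conj (e : MonoidAlgebra k G) (he : e ∈ Subalgebra.center k (MonoidAlgebra k G))
    (g x : G) : e (g * x * g⁻¹) = e x := by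
  have h := (Subalgebra.mem_center_iff.mp he) (MonoidAlgebra.single g 1)
  have h2 : (MonoidAlgebra.single g 1 * e : MonoidAlgebra k G) (g * x)
      = (e * MonoidAlgebra.single g 1 : MonoidAlgebra k G) (g * x) := by
    rw [h]
  rw [MonoidAlgebra.single_mul_apply, MonoidAlgebra.mul_single_apply] at h2
  simpa using h2.symm

lemma charP_MA (p : ℕ) [CharP k p] : CharP (MonoidAlgebra k G) p := by
  have hinj : Function.Injective (MonoidAlgebra.singleOneRingHom (R := k) (M := G)) := by
    intro a b hab
    simp only [MonoidAlgebra.singleOneRingHom_apply] at hab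
    exact MonoidAlgebra.single_right_injective (m := (1 : G)) hab
  exact charP_of_injective_ringHom hinj p

lemma commute_single_center {z : G} (hz : z ∈ Subgroup.center G) (x : MonoidAlgebra k G) :
    Commute (MonoidAlgebra.single z (1 : k)) x := by
  classical
  conv_rhs => rw [← MonoidAlgebra.sum_coeff_single x]
  rw [Finsupp.sum]
  apply Commute.sum_right
  intro g _
  show _ * _ = _ * _
  rw [MonoidAlgebra.single_mul_single, MonoidAlgebra.single_mul_single, one_mul, mul_one]
  rw [(Subgroup.mem_center_iff.mp hz g)]
end Conv
section JspanSec
variable (k : Type*) [Field k] {G : Type*} [Group G]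

/-- The `k`-span of `{single n 1 - 1 : n ∈ N}` inside the monoid algebra. -/
noncomputable def Jspan (N : Subgroup G) : Submodule k (MonoidAlgebra k G) :=
  Submodule.span k {x : MonoidAlgebra k G | ∃ n ∈ N, x = MonoidAlgebra.single n 1 - 1}

variable {k}

lemma mem_top_mul_Jspan (N : Subgroup G) (x : MonoidAlgebra k G)
    (hx : Finsupp.mapDomain (fun g : G => (QuotientGroup.mk g : G ⧸ N)) x.coeff = 0) :
    x ∈ (⊤ : Submodule k (MonoidAlgebra k G)) * Jspan k N := by
  classical
  have h1 : ∑ g ∈ x.coeff.support, MonoidAlgebra.single g (x g) = x := MonoidAlgebra.sum_coeff_single x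
  have h2 : ∑ g ∈ x.coeff.support,
      MonoidAlgebra.single (Quotient.out (QuotientGroup.mk g : G ⧸ N)) (x g) = 0 := by
    have hcomp : (fun g : G => (Quotient.out (QuotientGroup.mk g : G ⧸ N)))
        = (Quotient.out ∘ fun g : G => (QuotientGroup.mk g : G ⧸ N)) := rfl
    have : Finsupp.mapDomain (fun g : G => (Quotient.out (QuotientGroup.mk g : G ⧸ N))) x.coeff
        = 0 := by
      rw [hcomp, Finsupp.mapDomain_comp, hx, Finsupp.mapDomain_zero]
    rw [← MonoidAlgebra.coeff_eq_zero, MonoidAlgebra.coeff_sum]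
    simp only [MonoidAlgebra.coeff_single]
    simpa [Finsupp.mapDomain, Finsupp.sum] using this
  have hrepr : x = ∑ g ∈ x.coeff.support,
      (MonoidAlgebra.single g (x g)
        - MonoidAlgebra.single (Quotient.out (QuotientGroup.mk g : G ⧸ N)) (x g)) := by
    rw [Finset.sum_sub_distrib, h1, h2, sub_zero]
  rw [hrepr]
  apply Submodule.sum_mem
  intro g _
  set h := Quotient.out (QuotientGroup.mk g : G ⧸ N) with hh
  have hmkh : (QuotientGroup.mk h : G ⧸ N) = QuotientGroup.mk g := QuotientGroup.out_eq' _
  have hn : h⁻¹ * g ∈ N := by rw [← QuotientGroup.eq]; exact hmkh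
  have hsg : MonoidAlgebra.single g (x g) - MonoidAlgebra.single h (x g)
      = MonoidAlgebra.single h (x g) * (MonoidAlgebra.single (h⁻¹ * g) 1 - 1) := by
    rw [mul_sub, mul_one, MonoidAlgebra.single_mul_single, mul_one, mul_inv_cancel_left]
  rw [hsg]
  exact Submodule.mul_mem_mul Submodule.mem_top
    (Submodule.subset_span ⟨h⁻¹ * g, hn, rfl⟩)

lemma Jspan_mul_top_le {N : Subgroup G} (hN : N.Normal) :
    Jspan k N * (⊤ : Submodule k (MonoidAlgebra k G)) ≤ ⊤ * Jspan k N := by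
  classical
  rw [Submodule.mul_le]
  intro m hm t _
  induction hm using Submodule.span_induction with
  | mem y hy =>
    obtain ⟨nn, hnn, rfl⟩ := hy
    have key : (MonoidAlgebra.single nn (1 : k) - 1) * t
        = ∑ g ∈ t.coeff.support, MonoidAlgebra.single g (t g)
            * (MonoidAlgebra.single (g⁻¹ * nn * g) 1 - 1) := by
      conv_lhs => rw [← MonoidAlgebra.sum_coeff_single t, Finsupp.sum, Finset.mul_sum]
      refine Finset.sum_congr rfl fun g _ => ?_
      rw [sub_mul, one_mul, mul_sub, mul_one, MonoidAlgebra.single_mul_single,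
        MonoidAlgebra.single_mul_single, one_mul, mul_one]
      congr 2
      group
    rw [key]
    apply Submodule.sum_mem
    intro g _
    refine Submodule.mul_mem_mul Submodule.mem_top (Submodule.subset_span ⟨g⁻¹ * nn * g, ?_, rfl⟩)
    have := hN.conj_mem nn hnn g⁻¹
    simpa [mul_assoc] using this
  | zero => simp only [zero_mul]; exact Submodule.zero_mem _
  | add a b ha hb iha ihb => rw [add_mul]; exact Submodule.add_mem _ iha ihb
  | smul c a ha iha => rw [smul_mul_assoc]; exact Submodule.smul_mem _ _ iha

section PowLemmas
variable {R : Type*} [CommSemiring R] {A : Type*} [Semiring A] [Algebra R A]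

lemma pow_le_pow_mono {S S' : Submodule R A} (h : S ≤ S') (m : ℕ) : S ^ m ≤ S' ^ m := by
  induction m with
  | zero => simp
  | succ m ih => rw [pow_succ, pow_succ]; exact mul_le_mul' ih h

lemma pow_mul_top_le {J : Submodule R A} (h : J * ⊤ ≤ ⊤ * J) (m : ℕ) :
    J ^ m * ⊤ ≤ ⊤ * J ^ m := by
  induction m with
  | zero => rw [pow_zero, one_mul, mul_one]
  | succ m ih =>
    rw [pow_succ, mul_assoc]
    calc J ^ m * (J * ⊤) ≤ J ^ m * (⊤ * J) := mul_le_mul' le_rfl h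
      _ = (J ^ m * ⊤) * J := by rw [mul_assoc]
      _ ≤ (⊤ * J ^ m) * J := mul_le_mul' ih le_rfl
      _ = ⊤ * J ^ (m + 1) := by rw [mul_assoc, pow_succ]

lemma top_mul_pow_le {J : Submodule R A} (h : J * ⊤ ≤ ⊤ * J) (m : ℕ) :
    (⊤ * J) ^ (m + 1) ≤ ⊤ * J ^ (m + 1) := by
  induction m with
  | zero => rw [pow_one, pow_one]
  | succ m ih =>
    rw [pow_succ]
    calc (⊤ * J) ^ (m + 1) * (⊤ * J) ≤ (⊤ * J ^ (m + 1)) * (⊤ * J) :=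
          mul_le_mul' ih le_rfl
      _ = ⊤ * ((J ^ (m + 1) * ⊤) * J) := by rw [mul_assoc, mul_assoc]
      _ ≤ ⊤ * ((⊤ * J ^ (m + 1)) * J) :=
          mul_le_mul' le_rfl (mul_le_mul' (pow_mul_top_le h _) le_rfl)
      _ = (⊤ * ⊤) * (J ^ (m + 1) * J) := by rw [← mul_assoc, ← mul_assoc, mul_assoc]
      _ ≤ ⊤ * J ^ (m + 2) := mul_le_mul' le_top (le_of_eq (pow_succ J (m + 1)).symm)

lemma span_singleton_pow (a : A) (m : ℕ) :
    (Submodule.span R {a}) ^ m = Submodule.span R {a ^ m} := by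
  induction m with
  | zero => rw [pow_zero, pow_zero, Submodule.one_eq_span]
  | succ m ih =>
    rw [pow_succ, ih, Submodule.span_mul_span, Set.singleton_mul_singleton, pow_succ]

end PowLemmas
end JspanSec
section AugNil
variable {p : ℕ} [Fact p.Prime] {k : Type*} [Field k] [CharP k p]

lemma aug_nil_aux (n : ℕ) : ∀ (P : Type u) [Group P] [Finite P], Nat.card P ≤ n →
    IsPGroup p P → ∃ m : ℕ, (Jspan k (⊤ : Subgroup P)) ^ (m + 1) = ⊥ := by
  induction n with
  | zero =>
    intro P _ _ hcard _
    have : 0 < Nat.card P := Nat.card_pos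
    omega
  | succ n ih =>
    intro P _ _ hcard hP
    classical
    haveI : CharP (MonoidAlgebra k P) p := charP_MA p
    by_cases htriv : Nat.card P = 1
    · haveI hsub : Subsingleton P := (Nat.card_eq_one_iff_unique.mp htriv).1
      refine ⟨0, ?_⟩
      rw [pow_one, Jspan, Submodule.span_eq_bot]
      rintro x ⟨q, -, rfl⟩
      rw [Subsingleton.elim q 1, MonoidAlgebra.one_def, sub_self]
    · haveI : Nontrivial P := by
        rw [← Finite.one_lt_card_iff_nontrivial]
        have : 0 < Nat.card P := Nat.card_pos
        omega
      haveI := hP.center_nontrivial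
      obtain ⟨zc, hzc⟩ := exists_ne (1 : Subgroup.center P)
      set z : P := (zc : P) with hzdef
      have hzcen : z ∈ Subgroup.center P := zc.2
      have hz1 : z ≠ 1 := fun h => hzc (Subtype.ext h)
      set Z : Subgroup P := Subgroup.zpowers z with hZdef
      have hZcen : Z ≤ Subgroup.center P := Subgroup.zpowers_le.mpr hzcen
      haveI hZnorm : Z.Normal := by
        constructor
        intro a ha g
        have hcomm : g * a = a * g := Subgroup.mem_center_iff.mp (hZcen ha) g
        have : g * a * g⁻¹ = a := by rw [hcomm, mul_inv_cancel_right]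
        rwa [this]
      have hlt : Nat.card (P ⧸ Z) < Nat.card P := by
        have hcardeq := Subgroup.card_eq_card_quotient_mul_card_subgroup Z
        have h2 : 2 ≤ Nat.card Z := by
          haveI : Nontrivial Z := ⟨⟨⟨z, Subgroup.mem_zpowers z⟩, 1,
            fun h => hz1 (by simpa using congrArg Subtype.val h)⟩⟩
          exact Finite.one_lt_card_iff_nontrivial.mpr this
        have hq : 0 < Nat.card (P ⧸ Z) := Nat.card_pos
        calc Nat.card (P ⧸ Z) < Nat.card (P ⧸ Z) * 2 := by omega
          _ ≤ Nat.card (P ⧸ Z) * Nat.card Z := Nat.mul_le_mul_left _ h2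
          _ = Nat.card P := hcardeq.symm
      obtain ⟨m, hm⟩ := ih (P ⧸ Z) (by omega) (hP.to_quotient Z)
      set ψ := MonoidAlgebra.mapDomainAlgHom k k (QuotientGroup.mk' Z) with hψ
      have hψJ : Submodule.map ψ.toLinearMap (Jspan k (⊤ : Subgroup P))
          ≤ Jspan k (⊤ : Subgroup (P ⧸ Z)) := by
        rw [Jspan, Submodule.map_span, Submodule.span_le]
        rintro _ ⟨_, ⟨q, -, rfl⟩, rfl⟩
        refine Submodule.subset_span ⟨QuotientGroup.mk q, Subgroup.mem_top _, ?_⟩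
        show ψ.toLinearMap (MonoidAlgebra.single q 1 - 1) = _
        rw [AlgHom.toLinearMap_apply, map_sub, map_one, hψ,
          MonoidAlgebra.mapDomainAlgHom_apply, MonoidAlgebra.mapDomain_single,
          QuotientGroup.coe_mk']
      have hker : Jspan k (⊤ : Subgroup P) ^ (m + 1) ≤ LinearMap.ker ψ.toLinearMap := by
        have h1 : Submodule.map ψ.toLinearMap (Jspan k (⊤ : Subgroup P) ^ (m + 1)) ≤ ⊥ := by
          rw [Submodule.map_pow]
          calc (Submodule.map ψ.toLinearMap (Jspan k (⊤ : Subgroup P))) ^ (m + 1)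
              ≤ (Jspan k (⊤ : Subgroup (P ⧸ Z))) ^ (m + 1) := pow_le_pow_mono hψJ _
            _ = ⊥ := hm
        intro x hx
        rw [LinearMap.mem_ker]
        have := h1 ⟨x, hx, rfl⟩
        simpa using this
      set ζ : MonoidAlgebra k P := MonoidAlgebra.single z 1 - 1 with hζ
      have hζcomm : ∀ x : MonoidAlgebra k P, Commute ζ x := fun x =>
        ((commute_single_center hzcen x).sub_left (Commute.one_left x))
      have hZle : Jspan k Z ≤ (⊤ : Submodule k (MonoidAlgebra k P)) * Submodule.span k {ζ} := by
        rw [Jspan, Submodule.span_le]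
        rintro _ ⟨w, hw, rfl⟩
        obtain ⟨j, hj⟩ := (Submonoid.mem_powers_iff w z).mp (mem_powers_iff_mem_zpowers.mpr hw)
        subst hj
        clear hw
        induction j with
        | zero => simp only [pow_zero, MonoidAlgebra.one_def.symm, sub_self]
                  exact Submodule.zero_mem _
        | succ j ihj =>
          have hstep : MonoidAlgebra.single (z ^ (j+1)) (1:k) - 1
              = (MonoidAlgebra.single z (1:k)) ^ j * ζ
                + (MonoidAlgebra.single (z ^ j) (1:k) - 1) := by
            rw [hζ, mul_sub, mul_one, MonoidAlgebra.single_pow, one_pow,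
              MonoidAlgebra.single_mul_single, mul_one, ← pow_succ]
            abel
          rw [hstep]
          exact Submodule.add_mem _
            (Submodule.mul_mem_mul Submodule.mem_top (Submodule.mem_span_singleton_self ζ))
            ihj
      obtain ⟨ee, hee⟩ := hP z
      have hζpow : ζ ^ (p ^ ee) = 0 := by
        rw [hζ, sub_pow_char_pow_of_commute p ee (Commute.one_right _),
          MonoidAlgebra.single_pow, one_pow, hee, one_pow, MonoidAlgebra.one_def, sub_self]
      -- kernel ≤ ⊤ * span {ζ}
      have hker2 : LinearMap.ker ψ.toLinearMap
          ≤ (⊤ : Submodule k (MonoidAlgebra k P)) * Submodule.span k {ζ} := by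
        intro x hx
        have hx0 : Finsupp.mapDomain (fun g : P => (QuotientGroup.mk g : P ⧸ Z)) x.coeff = 0 := by
          have := LinearMap.mem_ker.mp hx
          rw [hψ] at this
          simpa [MonoidAlgebra.mapDomainAlgHom_apply, MonoidAlgebra.mapDomain, QuotientGroup.coe_mk'] using this
        have h3 := mem_top_mul_Jspan Z x hx0
        have h4 : (⊤ : Submodule k (MonoidAlgebra k P)) * Jspan k Z
            ≤ ⊤ * (⊤ * Submodule.span k {ζ}) := mul_le_mul' le_rfl hZle
        have h5 : (⊤ : Submodule k (MonoidAlgebra k P)) * (⊤ * Submodule.span k {ζ})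
            ≤ ⊤ * Submodule.span k {ζ} := by
          rw [← mul_assoc]
          exact mul_le_mul' le_top le_rfl
        exact h5 (h4 h3)
      -- swap for span {ζ}
      have hswap : Submodule.span k {ζ} * (⊤ : Submodule k (MonoidAlgebra k P))
          ≤ ⊤ * Submodule.span k {ζ} := by
        rw [Submodule.mul_le]
        intro a ha t _
        obtain ⟨c, rfl⟩ := Submodule.mem_span_singleton.mp ha
        rw [smul_mul_assoc, (hζcomm t).eq]
        exact Submodule.smul_mem _ _
          (Submodule.mul_mem_mul Submodule.mem_top (Submodule.mem_span_singleton_self ζ))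
      -- assemble
      have hpe : 0 < p ^ ee := pow_pos (Fact.out : p.Prime).pos ee
      refine ⟨(m + 1) * p ^ ee - 1, ?_⟩
      have hexp : ((m + 1) * p ^ ee - 1) + 1 = (m + 1) * (p ^ ee) := by
        have : 0 < (m + 1) * p ^ ee := by positivity
        omega
      rw [hexp, pow_mul]
      have hc1 : Jspan k (⊤ : Subgroup P) ^ (m + 1)
          ≤ ⊤ * Submodule.span k {ζ} := le_trans hker hker2
      have hc2 : (Jspan k (⊤ : Subgroup P) ^ (m + 1)) ^ (p ^ ee)
          ≤ (⊤ * Submodule.span k {ζ}) ^ (p ^ ee) := pow_le_pow_mono hc1 _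
      have hc3 : ((⊤ : Submodule k (MonoidAlgebra k P)) * Submodule.span k {ζ}) ^ (p ^ ee)
          ≤ ⊤ * (Submodule.span k {ζ}) ^ (p ^ ee) := by
        have := top_mul_pow_le hswap (p ^ ee - 1)
        rwa [Nat.sub_add_cancel (by omega)] at this
      have hc4 : (⊤ : Submodule k (MonoidAlgebra k P)) * (Submodule.span k {ζ}) ^ (p ^ ee) = ⊥ := by
        rw [span_singleton_pow, hζpow, Submodule.span_zero_singleton, Submodule.mul_bot]
      exact le_bot_iff.mp (le_trans hc2 (le_trans hc3 (le_of_eq hc4)))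

lemma Jspan_nilpotent {G : Type*} [Group G] [Fintype G] (Op : Subgroup G)
    (hpgrp : IsPGroup p Op) : ∃ m : ℕ, (Jspan k Op) ^ (m + 1) = ⊥ := by
  classical
  obtain ⟨m, hm⟩ := aug_nil_aux (k := k) (Nat.card Op) (↥Op) le_rfl hpgrp
  set ι := MonoidAlgebra.mapDomainAlgHom k k Op.subtype with hι
  have hmap : Submodule.map ι.toLinearMap (Jspan k (⊤ : Subgroup ↥Op)) = Jspan k Op := by
    rw [Jspan, Jspan, Submodule.map_span]
    congr 1
    ext x
    constructor
    · rintro ⟨_, ⟨q, -, rfl⟩, rfl⟩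
      refine ⟨(q : G), q.2, ?_⟩
      show ι.toLinearMap _ = _
      rw [AlgHom.toLinearMap_apply, map_sub, map_one, hι,
        MonoidAlgebra.mapDomainAlgHom_apply, MonoidAlgebra.mapDomain_single]
      rfl
    · rintro ⟨nn, hnn, rfl⟩
      refine ⟨MonoidAlgebra.single (⟨nn, hnn⟩ : ↥Op) 1 - 1, ⟨⟨nn, hnn⟩, Subgroup.mem_top _, rfl⟩, ?_⟩
      show ι.toLinearMap _ = _
      rw [AlgHom.toLinearMap_apply, map_sub, map_one, hι,
        MonoidAlgebra.mapDomainAlgHom_apply, MonoidAlgebra.mapDomain_single]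
      rfl
  refine ⟨m, ?_⟩
  rw [← hmap, ← Submodule.map_pow, hm, Submodule.map_bot]

end AugNil
section KeySec
variable {p : ℕ} [Fact p.Prime] {k : Type*} [Field k] [CharP k p]
variable {G : Type*} [Group G] [Fintype G]

lemma conj_sum (Op : Subgroup G) (hpgrp : IsPGroup p Op) (F : G → k)
    (hinv : ∀ q ∈ Op, ∀ x : G, F (q * x * q⁻¹) = F x)
    (hfix : ∀ x ∈ Subgroup.centralizer (Op : Set G), F x = 0) :
    ∑ x : G, F x = 0 := by
  classical
  set Q' : Subgroup (ConjAct G) :=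
    Subgroup.map (ConjAct.toConjAct : G ≃* ConjAct G).toMonoidHom Op with hQ'
  have hQ'p : IsPGroup p Q' := hpgrp.map _
  apply orb_sum hQ'p F
  · intro qq x
    obtain ⟨q, hq, hqeq⟩ := Subgroup.mem_map.mp qq.2
    have hsm : qq • x = q * x * q⁻¹ := by
      show (qq : ConjAct G) • x = _
      rw [ConjAct.smul_def, ← hqeq]
      simp
    rw [hsm]
    exact hinv q hq x
  · intro x hx
    apply hfix
    rw [Subgroup.mem_centralizer_iff]
    intro s hs
    have hs' : s ∈ Op := hs
    have hmem : (ConjAct.toConjAct : G ≃* ConjAct G).toMonoidHom s ∈ Q' :=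
      Subgroup.mem_map.mpr ⟨s, hs', rfl⟩
    have hfx := hx ⟨_, hmem⟩
    have h3 : (⟨(ConjAct.toConjAct : G ≃* ConjAct G).toMonoidHom s, hmem⟩ : Q') • x
        = s * x * s⁻¹ := by
      show ((ConjAct.toConjAct : G ≃* ConjAct G).toMonoidHom s) • x = _
      rw [ConjAct.smul_def]
      simp
    rw [h3] at hfx
    calc s * x = (s * x * s⁻¹) * s := by group
      _ = x * s := by rw [hfx]

lemma central_idem_eq_zero (Op : Subgroup G) (hnorm : Op.Normal) (hpgrp : IsPGroup p Op)
    (e : MonoidAlgebra k G) (hc : e ∈ Subalgebra.center k (MonoidAlgebra k G))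
    (hi : IsIdempotentElem e)
    (hvan : ∀ c ∈ Subgroup.centralizer (Op : Set G), e c = 0) : e = 0 := by
  classical
  have hmap : Finsupp.mapDomain (fun g : G => (QuotientGroup.mk g : G ⧸ Op)) e.coeff = 0 := by
    ext b
    have h1 : Finsupp.mapDomain (fun g : G => (QuotientGroup.mk g : G ⧸ Op)) e.coeff b
        = ∑ x : G, (if (QuotientGroup.mk x : G ⧸ Op) = b then e x else 0) := by
      rw [Finsupp.mapDomain, Finsupp.sum_fintype]
      · rw [Finset.sum_apply']
        apply Finset.sum_congr rfl
        intro x _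
        rw [Finsupp.single_apply]
      · intro x; simp
    rw [h1]
    have h2 : ∑ x : G, (if (QuotientGroup.mk x : G ⧸ Op) = b then e x else 0) = 0 := by
      apply conj_sum Op hpgrp
      · intro q hq x
        have hmk : (QuotientGroup.mk (q * x * q⁻¹) : G ⧸ Op) = QuotientGroup.mk x := by
          rw [QuotientGroup.eq]
          have hrw : (q * x * q⁻¹)⁻¹ * x = q * (x⁻¹ * q⁻¹ * x⁻¹⁻¹) := by group
          rw [hrw]
          exact mul_mem hq (hnorm.conj_mem q⁻¹ (inv_mem hq) x⁻¹)
        rw [hmk, central_conj e hc q x]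
      · intro x hx
        rw [hvan x hx]
        simp
    rw [h2]
    simp
  have hmem : e ∈ (⊤ : Submodule k (MonoidAlgebra k G)) * Jspan k Op :=
    mem_top_mul_Jspan Op e hmap
  obtain ⟨m, hm⟩ := Jspan_nilpotent (p := p) (k := k) Op hpgrp
  have hswap := Jspan_mul_top_le (k := k) hnorm
  have h5 : ((⊤ : Submodule k (MonoidAlgebra k G)) * Jspan k Op) ^ (m + 1)
      ≤ ⊤ * Jspan k Op ^ (m + 1) := top_mul_pow_le hswap m
  have h6 : e ^ (m + 1) ∈ ((⊤ : Submodule k (MonoidAlgebra k G)) * Jspan k Op) ^ (m + 1) :=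
    Submodule.pow_mem_pow _ hmem _
  have h7 : e ^ (m + 1) = e := hi.pow_succ_eq m
  have h8 : e ∈ (⊥ : Submodule k (MonoidAlgebra k G)) := by
    rw [← h7]
    have := h5 h6
    rwa [hm, Submodule.mul_bot] at this
  simpa using h8
end KeySec
section Main
variable {p : ℕ} [Fact p.Prime] {k : Type*} [Field k] [CharP k p]
variable {G : Type*} [Group G]

lemma sum_single_pow (n : ℕ) (s : Finset G)
    (hcomm : ∀ a ∈ s, ∀ b ∈ s, a * b = b * a) (v : G → k) :
    (∑ c ∈ s, MonoidAlgebra.single c (v c)) ^ (p ^ n)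
      = ∑ c ∈ s, MonoidAlgebra.single (c ^ p ^ n) ((v c) ^ p ^ n) := by
  classical
  haveI : CharP (MonoidAlgebra k G) p := charP_MA p
  revert hcomm
  induction s using Finset.induction_on with
  | empty => intro _; simp [zero_pow (pow_ne_zero n (Fact.out : p.Prime).pos.ne')]
  | @insert a s' ha ih =>
    intro hcomm
    rw [Finset.sum_insert ha, Finset.sum_insert ha]
    have hcm : Commute (MonoidAlgebra.single a (v a))
        (∑ c ∈ s', MonoidAlgebra.single c (v c)) := by
      apply Commute.sum_right
      intro c hc
      show _ * _ = _ * _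
      rw [MonoidAlgebra.single_mul_single, MonoidAlgebra.single_mul_single,
        hcomm a (Finset.mem_insert_self a s') c (Finset.mem_insert_of_mem hc),
        mul_comm (v a) (v c)]
    rw [add_pow_char_pow_of_commute p n hcm, MonoidAlgebra.single_pow,
      ih (fun x hx y hy => hcomm x (Finset.mem_insert_of_mem hx) y (Finset.mem_insert_of_mem hy))]
end Main

/-- If the largest normal `p`-subgroup `O_p(G)` of a finite group `G` contains its own
centraliser, then the group algebra `kG` over a field `k` of characteristic `p` has a
unique block: the only central idempotents are `0` and `1`. -/
theorem unique_block_of_pConstrained (p : ℕ) (hp : p.Prime) (G : Type*) [Group G]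
    [Fintype G] (k : Type*) [Field k] (hk : CharP k p)
    (Op : Subgroup G) (hnorm : Op.Normal) (hpgrp : IsPGroup p Op)
    (hmax : ∀ Q : Subgroup G, Q.Normal → IsPGroup p Q → Q ≤ Op)
    (hcent : Subgroup.centralizer (Op : Set G) ≤ Op) :
    ∀ e : MonoidAlgebra k G, e ∈ Subalgebra.center k (MonoidAlgebra k G) →
      IsIdempotentElem e → e = 0 ∨ e = 1 := by
  haveI : Fact p.Prime := ⟨hp⟩
  haveI : CharP k p := hk
  classical
  intro e hc hi
  set C := Subgroup.centralizer (Op : Set G) with hCdef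
  set f : MonoidAlgebra k G := MonoidAlgebra.ofCoeff (Finsupp.filter (· ∈ C) e.coeff) with hfdef
  have hfapp : ∀ x : G, f x = if x ∈ C then e x else 0 := fun x => by
    rw [hfdef, MonoidAlgebra.coeff_ofCoeff, Finsupp.filter_apply]
  have hee : e * e = e := hi
  have hconj : ∀ g x : G, e (g * x * g⁻¹) = e x := fun g x => central_conj e hc g x
  have hCconj : ∀ q ∈ Op, ∀ x ∈ C, q * x * q⁻¹ ∈ C := by
    intro q hq x hx
    rw [hCdef, Subgroup.mem_centralizer_iff]
    intro s hs
    have hs' : s ∈ Op := hs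
    have hsconj : q⁻¹ * s * q ∈ Op := by
      have := hnorm.conj_mem s hs' q⁻¹
      simpa using this
    have hxc : (q⁻¹ * s * q) * x = x * (q⁻¹ * s * q) :=
      Subgroup.mem_centralizer_iff.mp hx _ hsconj
    calc s * (q * x * q⁻¹) = q * ((q⁻¹ * s * q) * x) * q⁻¹ := by group
      _ = q * (x * (q⁻¹ * s * q)) * q⁻¹ := by rw [hxc]
      _ = (q * x * q⁻¹) * s := by group
  have hCiff : ∀ q ∈ Op, ∀ x : G, (q * x * q⁻¹ ∈ C ↔ x ∈ C) := by
    intro q hq x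
    constructor
    · intro h
      have h2 := hCconj q⁻¹ (inv_mem hq) _ h
      have key : q⁻¹ * (q * x * q⁻¹) * q⁻¹⁻¹ = x := by group
      rwa [key] at h2
    · exact hCconj q hq x
  have hCsub : ∀ x ∈ C, ∀ y ∈ C, x⁻¹ * y ∈ C := fun x hx y hy => mul_mem (inv_mem hx) hy
  have hff : f * f = f := by
    ext y
    rw [conv_apply]
    by_cases hy : y ∈ C
    · have hterm : ∀ x : G, f x * f (x⁻¹ * y) = (if x ∈ C then e x * e (x⁻¹ * y) else 0) := by
        intro x
        by_cases hx : x ∈ C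
        · rw [if_pos hx, hfapp, hfapp, if_pos hx, if_pos (hCsub x hx y hy)]
        · rw [if_neg hx, hfapp, if_neg hx, zero_mul]
      rw [Finset.sum_congr rfl (fun x _ => hterm x)]
      have hsplit : ∀ x : G, (if x ∈ C then e x * e (x⁻¹ * y) else 0)
          = e x * e (x⁻¹ * y) - (if x ∈ C then 0 else e x * e (x⁻¹ * y)) := by
        intro x; by_cases hx : x ∈ C <;> simp [hx]
      rw [Finset.sum_congr rfl (fun x _ => hsplit x), Finset.sum_sub_distrib]
      have horb : ∑ x : G, (if x ∈ C then 0 else e x * e (x⁻¹ * y)) = 0 := by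
        apply conj_sum Op hpgrp
        · intro q hq x
          have h1 : ((q * x * q⁻¹) ∈ C) ↔ (x ∈ C) := hCiff q hq x
          have h2 : e (q * x * q⁻¹) = e x := hconj q x
          have h3 : e ((q * x * q⁻¹)⁻¹ * y) = e (x⁻¹ * y) := by
            have hyq : q⁻¹ * y = y * q⁻¹ :=
              Subgroup.mem_centralizer_iff.mp hy q⁻¹ (inv_mem hq)
            have hcalc : (q * x * q⁻¹)⁻¹ * y = q * (x⁻¹ * y) * q⁻¹ := by
              calc (q * x * q⁻¹)⁻¹ * y = q * x⁻¹ * (q⁻¹ * y) := by group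
                _ = q * x⁻¹ * (y * q⁻¹) := by rw [hyq]
                _ = q * (x⁻¹ * y) * q⁻¹ := by group
            rw [hcalc, hconj]
          by_cases hx : x ∈ C
          · rw [if_pos (h1.mpr hx), if_pos hx]
          · rw [if_neg (fun hh => hx (h1.mp hh)), if_neg hx, h2, h3]
        · intro x hx
          rw [if_pos (show x ∈ C from hx)]
      rw [horb, sub_zero, ← conv_apply, hee, hfapp, if_pos hy]
    · have hterm : ∀ x : G, f x * f (x⁻¹ * y) = 0 := by
        intro x
        by_cases hx : x ∈ C
        · have hniy : x⁻¹ * y ∉ C := by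
            intro h
            apply hy
            have := mul_mem hx h
            simpa using this
          rw [hfapp (x⁻¹ * y), if_neg hniy, mul_zero]
        · rw [hfapp x, if_neg hx, zero_mul]
      rw [Finset.sum_congr rfl (fun x _ => hterm x), Finset.sum_const_zero, hfapp, if_neg hy]
  obtain ⟨nn, hnn⟩ := IsPGroup.iff_card.mp hpgrp
  have hord : ∀ c ∈ C, c ^ (p ^ nn) = 1 := by
    intro c hcm
    have hcOp : c ∈ Op := hcent hcm
    have h1 : (⟨c, hcOp⟩ : Op) ^ (p ^ nn) = 1 := by rw [← hnn]; exact pow_card_eq_one'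
    have h2 := congrArg (Subtype.val) h1
    simpa using h2
  have hsupp : ∀ c ∈ f.coeff.support, c ∈ C := by
    intro c hcs
    by_contra hcc
    have : f c = 0 := by rw [hfapp, if_neg hcc]
    exact (Finsupp.mem_support_iff.mp hcs) this
  have hcommS : ∀ a ∈ f.coeff.support, ∀ b ∈ f.coeff.support, a * b = b * a := by
    intro a ha b hb
    exact (Subgroup.mem_centralizer_iff.mp (hsupp a ha) b (hcent (hsupp b hb))).symm
  have hfs : f = ∑ c ∈ f.coeff.support, MonoidAlgebra.single c (f c) := (MonoidAlgebra.sum_coeff_single f).symm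
  have hfpow : f ^ (p ^ nn) = f := by
    have hppos : 0 < p ^ nn := pow_pos hp.pos nn
    have hi' : IsIdempotentElem f := hff
    calc f ^ (p ^ nn) = f ^ ((p ^ nn - 1) + 1) := by congr 1; omega
      _ = f := hi'.pow_succ_eq _
  have hsingle : f = MonoidAlgebra.single (1 : G) ((∑ c ∈ f.coeff.support, f c) ^ (p ^ nn)) := by
    have h2 : ∀ c ∈ f.coeff.support, MonoidAlgebra.single (c ^ p ^ nn) ((f c) ^ p ^ nn)
        = MonoidAlgebra.single (1 : G) ((f c) ^ p ^ nn) := by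
      intro c hcs
      rw [hord c (hsupp c hcs)]
    haveI : ExpChar k p := ExpChar.prime hp
    have h3 : (∑ c ∈ f.coeff.support, MonoidAlgebra.single c (f c)) ^ (p ^ nn)
        = MonoidAlgebra.single (1 : G) ((∑ c ∈ f.coeff.support, f c) ^ (p ^ nn)) := by
      rw [sum_single_pow nn f.coeff.support hcommS (fun c => f c), Finset.sum_congr rfl h2,
        sum_pow_char_pow p nn f.coeff.support (fun c => f c)]
      exact (map_sum (MonoidAlgebra.singleAddHom (1 : G)) _ _).symm
    calc f = f ^ (p ^ nn) := hfpow.symm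
      _ = (∑ c ∈ f.coeff.support, MonoidAlgebra.single c (f c)) ^ (p ^ nn) := by rw [← hfs]
      _ = _ := h3
  set s0 : k := (∑ c ∈ f.coeff.support, f c) ^ (p ^ nn) with hs0
  have hs0idem : s0 * s0 = s0 := by
    have hmul := hff
    rw [hsingle, MonoidAlgebra.single_mul_single, mul_one] at hmul
    exact MonoidAlgebra.single_right_injective (m := (1 : G)) hmul
  have hcase : s0 = 0 ∨ s0 = 1 := by
    have h0 : s0 * (s0 - 1) = 0 := by rw [mul_sub, hs0idem, mul_one, sub_self]
    rcases mul_eq_zero.mp h0 with h | h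
    · exact Or.inl h
    · exact Or.inr (sub_eq_zero.mp h)
  rcases hcase with h | h
  · left
    apply central_idem_eq_zero Op hnorm hpgrp e hc hi
    intro c hcm
    have h1 : f c = 0 := by rw [hsingle, h]; simp
    rw [hfapp, if_pos (show c ∈ C from hcm)] at h1
    exact h1
  · right
    have hf1 : f = 1 := by rw [hsingle, h, MonoidAlgebra.one_def]
    have hvan : ∀ c ∈ Subgroup.centralizer (Op : Set G), (1 - e) c = 0 := by
      intro c hcm
      have h1 : f c = e c := by rw [hfapp, if_pos (show c ∈ C from hcm)]
      have h2 : f c = (1 : MonoidAlgebra k G) c := by rw [hf1]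
      show (1 - e : MonoidAlgebra k G) c = 0
      rw [MonoidAlgebra.coeff_sub, Finsupp.sub_apply, ← h2, h1, sub_self]
    have hz := central_idem_eq_zero Op hnorm hpgrp (1 - e)
      (Subalgebra.sub_mem _ (Subalgebra.one_mem _) hc) hi.one_sub hvan
    exact (sub_eq_zero.mp hz).symm
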